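/- arXiv:2512.05820 — 2 statements merged into one kernel-verified Lean document; each statement's English description precedes it below -/
import Mathlib

section
/- Every isolated plane curve singularity admits a nice total order on its set of branches. (Proved by induction on the number of blow-ups needed for the minimal embedded resolution: for one branch the unique order is nice; otherwise any total order on the tangent directions combined with nice orders on the strict transforms at each tangent point induces a nice total order.) -/
/-- Recursive combinatorial model of the resolution process of an isolated plane
curve singularity: either the germ is smooth (a single branch), or blowing up the
origin produces `n + 1` distinct tangent points, at each of which sits the germ of
the strict transform, a plane curve requiring fewer blow-ups. -/
inductive CurveTree : Type where
  | smooth : CurveTree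
  | blowup (n : ℕ) (children : Fin (n + 1) → CurveTree) : CurveTree

/-- The set of branches of the curve germ: a smooth germ has a single branch, and
the branches of a singular germ are the branches of its strict transforms at the
tangent points. -/
def CurveTree.Branches : CurveTree → Type
  | .smooth => Unit
  | .blowup n c => Σ i : Fin (n + 1), (c i).Branches

/-- A (strict total) order `lt` on the branches is *nice* if: (i) for a smooth germ
(one branch) the unique order is nice; (ii) two branches with the same tangent
compare in the same way against any branch with a different tangent; (iii) the
induced order on the branches of each strict transform is again nice. -/
def CurveTree.Nice : (T : CurveTree) → (T.Branches → T.Branches → Prop) → Prop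
  | .smooth, _ => True
  | .blowup n c, lt =>
      (∀ (i j : Fin (n + 1)) (a b : (c i).Branches) (d : (c j).Branches),
          i ≠ j →
            ((lt ⟨i, a⟩ ⟨j, d⟩ ↔ lt ⟨i, b⟩ ⟨j, d⟩) ∧
             (lt ⟨j, d⟩ ⟨i, a⟩ ↔ lt ⟨j, d⟩ ⟨i, b⟩))) ∧
      (∀ i : Fin (n + 1), (c i).Nice (fun a b => lt ⟨i, a⟩ ⟨i, b⟩))

/-! The lexicographic order "first by tangent direction, then inside the strict transform" is
nice: branches with different tangents are compared by their tangents alone, and on the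
branches through one tangent point it restricts to the chosen nice order there. Induction on
the resolution tree then gives a nice total order. -/

namespace Sigma

variable {ι : Type*} {α : ι → Type*} {r : ι → ι → Prop} {s : ∀ i, α i → α i → Prop}

theorem lex_mk_mk_of_ne {i j : ι} (hij : i ≠ j) (a : α i) (b : α j) :
    Lex r s ⟨i, a⟩ ⟨j, b⟩ ↔ r i j := by
  refine ⟨fun h => ?_, Lex.left a b⟩
  cases h with
  | left _ _ hr => exact hr
  | right _ _ _ => exact absurd rfl hij

theorem lex_mk_mk_self [Std.Irrefl r] {i : ι} (a b : α i) :
    Lex r s ⟨i, a⟩ ⟨i, b⟩ ↔ s i a b := by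
  refine ⟨fun h => ?_, Lex.right a b⟩
  cases h with
  | left _ _ hr => exact absurd hr (irrefl i)
  | right _ _ hs => exact hs

theorem isStrictTotalOrder_lex [IsStrictTotalOrder ι r]
    (hs : ∀ i, IsStrictTotalOrder (α i) (s i)) :
    IsStrictTotalOrder (Σ i, α i) (Lex r s) := {}

end Sigma

namespace CurveTree

theorem nice_blowup_lex {n : ℕ} {c : Fin (n + 1) → CurveTree}
    {r : Fin (n + 1) → Fin (n + 1) → Prop} [Std.Irrefl r]
    {lt : ∀ i, (c i).Branches → (c i).Branches → Prop}
    (hlt : ∀ i, (c i).Nice (lt i)) :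
    (blowup n c).Nice (Sigma.Lex r lt) := by
  refine ⟨fun i j a b d hij => ?_, fun i => ?_⟩
  · simp only [Sigma.lex_mk_mk_of_ne hij, Sigma.lex_mk_mk_of_ne hij.symm, iff_self, and_self]
  · simpa only [Sigma.lex_mk_mk_self] using hlt i

end CurveTree

/-- Every (isolated) plane curve singularity admits a nice total order on its set
of branches. -/
theorem exists_nice_total_order (T : CurveTree) :
    ∃ lt : T.Branches → T.Branches → Prop,
      IsStrictTotalOrder T.Branches lt ∧ T.Nice lt := by
  induction T with
  | smooth => exact ⟨@LT.lt Unit _, inferInstanceAs (IsStrictTotalOrder Unit (· < ·)), trivial⟩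
  | blowup n c ih =>
    choose lt hlt hnice using ih
    exact ⟨Sigma.Lex (· < ·) lt, Sigma.isStrictTotalOrder_lex hlt,
      CurveTree.nice_blowup_lex hnice⟩
end

section
/- Let Γ be a finite directed tree rooted at 0 with integer multiplicities m_ℓ attached to vertices, and suppose the nonzero coefficients a_{ik} (for each directed edge i → k) satisfy the recursion a_{0k} = ∏_{ℓ ∈ 𝒱₀, ℓ ≠ k} (h₀(k) − h₀(ℓ))^{m_ℓ} and a_{ik} = a_{ij} · ∏_{ℓ ∈ 𝒱ᵢ⁺, ℓ ≠ k} (h_i(k) − h_i(ℓ))^{m_ℓ} where j → i, and where the h_i are injective integer-valued labeling functions. Then a_{ik} is a nonzero integer and sign(a_{ik}) = (−1)^{M_{ik}}, where M_{ik} = Σ_{r=0}^{s} Σ_{c ∈ S_{ℓ_r ℓ_{r+1}}} m_c, the sum over the geodesic 0 = ℓ₀ → ℓ₁ → ⋯ → ℓ_{s+1} = k, with S_{iℓ} = { c neighbor of i : h_i(c) > h_i(ℓ) }. -/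
open Finset

/-- Let `Γ` be a finite directed tree rooted at `root`, with positive integer
multiplicities `m`, injective integer labeling functions `h i` on the children of
each vertex, and nonzero coefficients `a i k` (for each directed edge `i → k`)
defined by the recursion `a 0 k = ∏_{l ≠ k} (h 0 k - h 0 l) ^ m l` at the root and
`a i k = a j i * ∏_{l ≠ k} (h i k - h i l) ^ m l` where `j` is the parent of `i`.
Then `a i k` is a nonzero integer with `sign (a i k) = (-1) ^ M k`, where `M k`
accumulates, along the geodesic from the root to `k`, the multiplicities of the
children with label larger than that of the next vertex on the geodesic. -/
theorem sign_of_a_ik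
    {V : Type*} [Fintype V] [DecidableEq V]
    (root : V) (parent : V → V) (hroot : parent root = root)
    (hreach : ∀ v : V, ∃ n : ℕ, parent^[n] v = root)
    (children : V → Finset V)
    (hchildren : ∀ i k : V, k ∈ children i ↔ parent k = i ∧ k ≠ root)
    (h : V → V → ℤ)
    (hinj : ∀ i : V, ∀ k ∈ children i, ∀ l ∈ children i, h i k = h i l → k = l)
    (m : V → ℕ) (hm : ∀ v, 0 < m v)
    (a : V → V → ℤ)
    (ha0 : ∀ k ∈ children root,
        a root k = ∏ l ∈ (children root).erase k, (h root k - h root l) ^ m l)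
    (ha : ∀ i : V, i ≠ root → ∀ k ∈ children i,
        a i k = a (parent i) i * ∏ l ∈ (children i).erase k, (h i k - h i l) ^ m l)
    (S : V → V → Finset V)
    (hS : ∀ i k : V, S i k = (children i).filter (fun c => h i k < h i c))
    (M : V → ℕ)
    (hMroot : M root = 0)
    (hM : ∀ k : V, k ≠ root → M k = M (parent k) + ∑ c ∈ S (parent k) k, m c) :
    ∀ k : V, k ≠ root →
      a (parent k) k ≠ 0 ∧ (a (parent k) k).sign = (-1) ^ M k := by
  classical
  -- sign as a monoid hom
  let sg : ℤ →* ℤ := { toFun := Int.sign, map_one' := rfl, map_mul' := Int.sign_mul }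
  -- key computation for the product factor
  have key : ∀ i : V, ∀ k ∈ children i,
      (∏ l ∈ (children i).erase k, (h i k - h i l) ^ m l) ≠ 0 ∧
      (∏ l ∈ (children i).erase k, (h i k - h i l) ^ m l).sign
        = (-1) ^ (∑ c ∈ S i k, m c) := by
    intro i k hk
    have hne : ∀ l ∈ (children i).erase k, h i k - h i l ≠ 0 := by
      intro l hl hz
      have hl' := Finset.mem_of_mem_erase hl
      have hlk := Finset.ne_of_mem_erase hl
      exact hlk ((hinj i k hk l hl' (by omega)).symm)
    constructor
    · rw [Finset.prod_ne_zero_iff]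
      intro l hl
      exact pow_ne_zero _ (hne l hl)
    · have hmap : (∏ l ∈ (children i).erase k, (h i k - h i l) ^ m l).sign
          = ∏ l ∈ (children i).erase k, (Int.sign (h i k - h i l)) ^ m l := by
        have h0 : (∏ l ∈ (children i).erase k, (h i k - h i l) ^ m l).sign
            = sg (∏ l ∈ (children i).erase k, (h i k - h i l) ^ m l) := rfl
        rw [h0, map_prod]
        exact Finset.prod_congr rfl (fun l _ => map_pow sg _ _)
      rw [hmap]
      rw [← Finset.prod_filter_mul_prod_filter_not ((children i).erase k)
        (fun l => h i k < h i l)]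
      have hfil : ((children i).erase k).filter (fun l => h i k < h i l) = S i k := by
        rw [hS, Finset.filter_erase]
        refine Finset.erase_eq_of_notMem ?_
        simp
      rw [hfil]
      have h1 : ∏ l ∈ S i k, (Int.sign (h i k - h i l)) ^ m l
          = ∏ l ∈ S i k, (-1 : ℤ) ^ m l := by
        refine Finset.prod_congr rfl ?_
        intro l hl
        rw [hS] at hl
        have := (Finset.mem_filter.mp hl).2
        rw [Int.sign_eq_neg_one_of_neg (by omega)]
      have h2 : ∏ l ∈ ((children i).erase k).filter (fun l => ¬ h i k < h i l),
          (Int.sign (h i k - h i l)) ^ m l = 1 := by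
        refine Finset.prod_eq_one ?_
        intro l hl
        rw [Finset.mem_filter] at hl
        have hpos : 0 < h i k - h i l := by
          have := hne l hl.1
          have := hl.2
          omega
        rw [Int.sign_eq_one_of_pos hpos, one_pow]
      rw [h1, h2, mul_one, Finset.prod_pow_eq_pow_sum]
  -- main induction on the distance to the root
  have main : ∀ n : ℕ, ∀ k : V, k ≠ root → parent^[n] k = root →
      a (parent k) k ≠ 0 ∧ (a (parent k) k).sign = (-1) ^ M k := by
    intro n
    induction n with
    | zero => intro k hk hit; exact absurd hit hk
    | succ n ih =>
      intro k hk hit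
      rw [Function.iterate_succ_apply] at hit
      have hkmem : k ∈ children (parent k) := (hchildren (parent k) k).mpr ⟨rfl, hk⟩
      obtain ⟨hP, hPsign⟩ := key (parent k) k hkmem
      by_cases hpr : parent k = root
      · have ha0' := ha0 k (hpr ▸ hkmem)
        rw [hM k hk, hpr, hMroot]
        rw [hpr] at hP hPsign
        rw [ha0']
        exact ⟨hP, by simpa using hPsign⟩
      · obtain ⟨hne', hsgn'⟩ := ih (parent k) hpr hit
        have ha' := ha (parent k) hpr k hkmem
        rw [ha']
        constructor
        · exact mul_ne_zero hne' hP
        · rw [Int.sign_mul, hsgn', hPsign, hM k hk, pow_add]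
  intro k hk
  obtain ⟨n, hn⟩ := hreach k
  exact main n k hk hn
end
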